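/- Let k be a number field and v a place of k with normalized absolute value ‖·‖_v. Let L_1, ..., L_{l+1} and L̂_1, ..., L̂_{n+1} be nonzero linear forms in M+1 variables over k with l ≥ n, such that L̂_1 = L_1 and, for each t ∈ {2, ..., n+1}, L̂_t lies in the k-linear span of L_2, ..., L_{l−n+t}. Then there exists a constant C (independent of the point) such that for every point P ∈ ℙ^M(k) with ‖L_1(P)‖_v ≤ ‖L_2(P)‖_v ≤ ... ≤ ‖L_{l+1}(P)‖_v and with no L_j and no L̂_t vanishing at P, one has ∑_{j=1}^{l+1} λ_{H_j,v}(P) ≤ (l−n+1) · ∑_{t=1}^{n+1} λ_{Ĥ_t,v}(P) + C, where H_j and Ĥ_t are the hyperplanes defined by L_j and L̂_t, and λ_{H,v}(P) denotes the standard Weil function of the hyperplane H at v. -/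
import Mathlib


open scoped BigOperators

/-- The standard local Weil function of the hyperplane of `ℙ^M(k)` defined by a
nonzero linear form `L` in `M + 1` variables, at the absolute value `v`, evaluated
at the point with homogeneous coordinates `x = [x_0 : ⋯ : x_M]`:
`λ_{H,v}(x) = log ( max_i ‖x_i‖_v · ‖L‖_v / ‖L(x)‖_v )`,
where `‖L‖_v` is the maximum of the `v`-absolute values of the coefficients of `L`. -/
noncomputable def weilHyperplane {k : Type*} [Field k] (v : AbsoluteValue k ℝ)
    {M : ℕ} (L : (Fin (M + 1) → k) →ₗ[k] k) (x : Fin (M + 1) → k) : ℝ :=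
  Real.log (((Finset.univ.sup' Finset.univ_nonempty fun i => v (x i)) *
      (Finset.univ.sup' Finset.univ_nonempty fun i => v (L (Pi.single i 1)))) /
    v (L x))

section Helpers

variable {k : Type*} [Field k] (v : AbsoluteValue k ℝ) {M : ℕ}

noncomputable def wSup (x : Fin (M + 1) → k) : ℝ :=
  Finset.univ.sup' Finset.univ_nonempty fun i => v (x i)

noncomputable def wNrm (L : (Fin (M + 1) → k) →ₗ[k] k) : ℝ :=
  Finset.univ.sup' Finset.univ_nonempty fun i => v (L (Pi.single i 1))

lemma weilHyperplane_def (L : (Fin (M + 1) → k) →ₗ[k] k) (x : Fin (M + 1) → k) :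
    weilHyperplane v L x = Real.log (wSup v x * wNrm v L / v (L x)) := rfl

lemma apply_eq_sum (L : (Fin (M + 1) → k) →ₗ[k] k) (x : Fin (M + 1) → k) :
    L x = ∑ i, x i • L (Pi.single i 1) := by
  rw [LinearMap.pi_apply_eq_sum_univ]
  refine Finset.sum_congr rfl fun i _ => ?_
  congr 2
  funext j
  simp [Pi.single_apply, eq_comm]

lemma wSup_pos {x : Fin (M + 1) → k} (hx : x ≠ 0) : 0 < wSup v x := by
  obtain ⟨i, hi⟩ := Function.ne_iff.mp hx
  unfold wSup
  exact lt_of_lt_of_le (v.pos hi)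
    (Finset.le_sup' (f := fun i => v (x i)) (Finset.mem_univ i))

lemma wNrm_pos {L : (Fin (M + 1) → k) →ₗ[k] k} (hL : L ≠ 0) : 0 < wNrm v L := by
  by_contra h
  push_neg at h
  apply hL
  have hz : ∀ i, L (Pi.single i 1) = 0 := by
    intro i
    have h1 : v (L (Pi.single i 1)) ≤ 0 :=
      le_trans (Finset.le_sup' (f := fun i => v (L (Pi.single i 1))) (Finset.mem_univ i)) h
    have h2 : 0 ≤ v (L (Pi.single i 1)) := v.nonneg _
    exact v.eq_zero.mp (le_antisymm h1 h2)
  refine LinearMap.ext fun y => ?_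
  rw [apply_eq_sum]
  simp [hz]

lemma eval_le (L : (Fin (M + 1) → k) →ₗ[k] k) (x : Fin (M + 1) → k) :
    v (L x) ≤ ((M : ℝ) + 1) * (wSup v x * wNrm v L) := by
  rw [apply_eq_sum]
  calc v (∑ i, x i • L (Pi.single i 1)) ≤ ∑ i, v (x i • L (Pi.single i 1)) :=
        v.sum_le _ _
    _ ≤ ∑ _i : Fin (M + 1), wSup v x * wNrm v L := by
        refine Finset.sum_le_sum fun i _ => ?_
        rw [smul_eq_mul, map_mul]
        unfold wSup wNrm
        exact mul_le_mul (Finset.le_sup' (f := fun i => v (x i)) (Finset.mem_univ i))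
          (Finset.le_sup' (f := fun i => v (L (Pi.single i 1))) (Finset.mem_univ i))
          (v.nonneg _)
          (le_trans (v.nonneg _)
            (Finset.le_sup' (f := fun i => v (x i)) (Finset.mem_univ i)))
    _ = ((M : ℝ) + 1) * (wSup v x * wNrm v L) := by
        rw [Finset.sum_const, Finset.card_univ, Fintype.card_fin, nsmul_eq_mul]
        push_cast; ring

lemma weil_lower {L : (Fin (M + 1) → k) →ₗ[k] k} {x : Fin (M + 1) → k}
    (hL : L ≠ 0) (hx : x ≠ 0) (hLx : L x ≠ 0) :
    -Real.log ((M : ℝ) + 1) ≤ weilHyperplane v L x := by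
  have hM : (0 : ℝ) < (M : ℝ) + 1 := by positivity
  have hS := wSup_pos v hx
  have hN := wNrm_pos v hL
  have hv := v.pos hLx
  rw [weilHyperplane_def, ← Real.log_inv]
  apply Real.log_le_log (by positivity)
  rw [le_div_iff₀ hv, inv_mul_le_iff₀ hM]
  exact eval_le v L x

lemma weil_compare {L L' : (Fin (M + 1) → k) →ₗ[k] k} {x : Fin (M + 1) → k} {C : ℝ}
    (hL : L ≠ 0) (hL' : L' ≠ 0) (hx : x ≠ 0) (hLx : L x ≠ 0) (hL'x : L' x ≠ 0)
    (hC : 0 < C) (h : v (L x) ≤ C * v (L' x)) :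
    weilHyperplane v L' x ≤
      weilHyperplane v L x + Real.log (C * wNrm v L' / wNrm v L) := by
  have hS := wSup_pos v hx
  have hN := wNrm_pos v hL
  have hN' := wNrm_pos v hL'
  have hv := v.pos hLx
  have hv' := v.pos hL'x
  rw [weilHyperplane_def, weilHyperplane_def,
    ← Real.log_mul (by positivity) (by positivity)]
  apply Real.log_le_log (by positivity)
  rw [div_mul_div_comm, div_le_div_iff₀ hv' (by positivity)]
  nlinarith [mul_le_mul_of_nonneg_left h
    (by positivity : (0:ℝ) ≤ wSup v x * wNrm v L * wNrm v L')]

end Helpers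

/-- **Comparison of Weil functions of hyperplanes with those of generic linear
combinations** (He–Ru, inequality (2.7) in the proof of the divisor-case theorem).

`k` is a number field and `v` a place of `k`, with (normalized) absolute value
`‖·‖_v`.  `L 0, …, L l` are the nonzero linear forms `L_1, …, L_{l+1}` in `M + 1`
variables over `k`, and `Lh 0, …, Lh n` are the nonzero linear forms
`L̂_1, …, L̂_{n+1}`, with `l ≥ n`, such that `L̂_1 = L_1` and, for each
`t ∈ {2, …, n+1}`, `L̂_t` lies in the `k`-linear span of `L_2, …, L_{l-n+t}`
(`0`-indexed: for `1 ≤ t`, `Lh t` lies in the span of the `L j` with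
`1 ≤ j ≤ l - n + t`).

Conclusion: there is a constant `C` (independent of the point) such that for every
point `P ∈ ℙ^M(k)`, with homogeneous coordinates a nonzero vector `x`, for which
`‖L_1(P)‖_v ≤ ‖L_2(P)‖_v ≤ ⋯ ≤ ‖L_{l+1}(P)‖_v` and no `L_j` and no `L̂_t` vanishes
at `P`, one has
`∑_{j=1}^{l+1} λ_{H_j,v}(P) ≤ (l - n + 1) · ∑_{t=1}^{n+1} λ_{Ĥ_t,v}(P) + C`,
where `H_j` and `Ĥ_t` are the hyperplanes defined by `L_j` and `L̂_t` and
`λ_{H,v}` is the standard Weil function of `H` at `v`. -/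
theorem weil_function_comparison_generic_linear_combinations
    (k : Type*) [Field k] [NumberField k]
    (v : AbsoluteValue k ℝ)
    (M n l : ℕ) (hnl : n ≤ l)
    (L : Fin (l + 1) → ((Fin (M + 1) → k) →ₗ[k] k))
    (Lh : Fin (n + 1) → ((Fin (M + 1) → k) →ₗ[k] k))
    (hLne : ∀ j, L j ≠ 0) (hLhne : ∀ t, Lh t ≠ 0)
    (hfirst : Lh 0 = L 0)
    (hspan : ∀ t : Fin (n + 1), 1 ≤ (t : ℕ) →
      Lh t ∈ Submodule.span k
        (L '' {j : Fin (l + 1) | 1 ≤ (j : ℕ) ∧ (j : ℕ) ≤ l - n + (t : ℕ)})) :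
    ∃ C : ℝ, ∀ x : Fin (M + 1) → k, x ≠ 0 →
      (∀ i j : Fin (l + 1), i ≤ j → v (L i x) ≤ v (L j x)) →
      (∀ j, L j x ≠ 0) → (∀ t, Lh t x ≠ 0) →
      ∑ j : Fin (l + 1), weilHyperplane v (L j) x
        ≤ ((l : ℝ) - n + 1) * ∑ t : Fin (n + 1), weilHyperplane v (Lh t) x + C := by
  classical
  have hmem : ∀ t : Fin n, ∃ c : ((Fin (M + 1) → k) →ₗ[k] k) →₀ k,
      ((c.support : Set ((Fin (M + 1) → k) →ₗ[k] k)) ⊆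
        L '' {j : Fin (l + 1) | 1 ≤ (j : ℕ) ∧ (j : ℕ) ≤ l - n + ((t.succ : Fin (n + 1)) : ℕ)}) ∧
      (c.sum fun mi r => r • mi) = Lh t.succ := by
    intro t
    exact Submodule.mem_span_set.mp (hspan t.succ (by simp [Fin.val_succ]))
  choose c hcsupp hcsum using hmem
  set A : Fin n → ℝ := fun t => (∑ m ∈ (c t).support, v (c t m)) + 1 with hA
  have hApos : ∀ t, 0 < A t := by
    intro t
    have : 0 ≤ ∑ m ∈ (c t).support, v (c t m) :=
      Finset.sum_nonneg fun m _ => v.nonneg _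
    simp only [hA]
    linarith
  set Jlow : Fin (l - n + 1) → Fin (l + 1) :=
    fun i => ⟨(i : ℕ), by have := i.isLt; omega⟩ with hJlow
  set J : Fin n → Fin (l + 1) :=
    fun t => ⟨l - n + 1 + (t : ℕ), by have := t.isLt; omega⟩ with hJ
  refine ⟨(∑ i : Fin (l - n + 1), Real.log (1 * wNrm v (L (Jlow i)) / wNrm v (L 0)))
      + (∑ t : Fin n, Real.log (A t * wNrm v (L (J t)) / wNrm v (Lh t.succ)))
      + ((l - n : ℕ) : ℝ) * ((n : ℝ) * Real.log ((M : ℝ) + 1)), ?_⟩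
  intro x hx hord hLx hLhx
  have hb1 : ∀ i : Fin (l - n + 1),
      weilHyperplane v (L (Jlow i)) x
        ≤ weilHyperplane v (Lh 0) x + Real.log (1 * wNrm v (L (Jlow i)) / wNrm v (L 0)) := by
    intro i
    rw [hfirst]
    exact weil_compare v (hLne 0) (hLne _) hx (hLx 0) (hLx _) one_pos
      (by rw [one_mul]; exact hord 0 _ (Fin.zero_le _))
  have hb2 : ∀ t : Fin n,
      weilHyperplane v (L (J t)) x
        ≤ weilHyperplane v (Lh t.succ) x
          + Real.log (A t * wNrm v (L (J t)) / wNrm v (Lh t.succ)) := by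
    intro t
    refine weil_compare v (hLhne t.succ) (hLne (J t)) hx (hLhx t.succ) (hLx (J t))
      (hApos t) ?_
    have hev : Lh t.succ x = ∑ mi ∈ (c t).support, (c t) mi * mi x := by
      rw [← hcsum t, Finsupp.sum, LinearMap.coe_sum, Finset.sum_apply]
      exact Finset.sum_congr rfl fun mi _ => by
        rw [LinearMap.smul_apply, smul_eq_mul]
    calc v (Lh t.succ x) ≤ ∑ mi ∈ (c t).support, v ((c t) mi) * v (mi x) := by
          rw [hev]
          exact le_of_le_of_eq (v.sum_le _ _)
            (Finset.sum_congr rfl fun mi _ => map_mul v _ _)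
      _ ≤ ∑ mi ∈ (c t).support, v ((c t) mi) * v (L (J t) x) := by
          refine Finset.sum_le_sum fun mi hmi => ?_
          obtain ⟨j, hj, hjm⟩ := hcsupp t (Finset.mem_coe.mpr hmi)
          refine mul_le_mul_of_nonneg_left ?_ (v.nonneg _)
          rw [← hjm]
          refine hord j (J t) ?_
          rw [Fin.le_def]
          have h1 := hj.2
          simp only [Fin.val_succ] at h1
          have h2 := t.isLt
          simp only [hJ]
          omega
      _ = (∑ mi ∈ (c t).support, v ((c t) mi)) * v (L (J t) x) :=
          (Finset.sum_mul _ _ _).symm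
      _ ≤ A t * v (L (J t) x) := by
          refine mul_le_mul_of_nonneg_right ?_ (v.nonneg _)
          simp only [hA]
          linarith
  have hlow : ∀ t : Fin (n + 1),
      -Real.log ((M : ℝ) + 1) ≤ weilHyperplane v (Lh t) x :=
    fun t => weil_lower v (hLhne t) hx (hLhx t)
  set f : ℕ → ℝ := fun j =>
    if h : j < l + 1 then weilHyperplane v (L ⟨j, h⟩) x else 0 with hf
  have hsplit : ∑ j : Fin (l + 1), weilHyperplane v (L j) x
      = (∑ i : Fin (l - n + 1), weilHyperplane v (L (Jlow i)) x)
        + ∑ t : Fin n, weilHyperplane v (L (J t)) x := by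
    have e1 : ∑ j : Fin (l + 1), weilHyperplane v (L j) x
        = ∑ j ∈ Finset.range (l + 1), f j := by
      rw [← Fin.sum_univ_eq_sum_range]
      refine Finset.sum_congr rfl fun j _ => ?_
      simp only [hf]
      rw [dif_pos j.isLt]
    rw [e1, show l + 1 = (l - n + 1) + n by omega, Finset.sum_range_add]
    congr 1
    · rw [← Fin.sum_univ_eq_sum_range f (l - n + 1)]
      refine Finset.sum_congr rfl fun i _ => ?_
      simp only [hf]
      rw [dif_pos (show (i : ℕ) < l + 1 by have := i.isLt; omega)]
    · rw [← Fin.sum_univ_eq_sum_range (fun i => f (l - n + 1 + i)) n]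
      refine Finset.sum_congr rfl fun t _ => ?_
      simp only [hf]
      rw [dif_pos (show l - n + 1 + (t : ℕ) < l + 1 by have := t.isLt; omega)]
  have hstep : ∑ j : Fin (l + 1), weilHyperplane v (L j) x
      ≤ (((l - n + 1 : ℕ) : ℝ) * weilHyperplane v (Lh 0) x
          + ∑ i : Fin (l - n + 1), Real.log (1 * wNrm v (L (Jlow i)) / wNrm v (L 0)))
        + ((∑ t : Fin n, weilHyperplane v (Lh t.succ) x)
          + ∑ t : Fin n, Real.log (A t * wNrm v (L (J t)) / wNrm v (Lh t.succ))) := by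
    rw [hsplit]
    gcongr ?_ + ?_
    · calc ∑ i : Fin (l - n + 1), weilHyperplane v (L (Jlow i)) x
          ≤ ∑ i : Fin (l - n + 1), (weilHyperplane v (Lh 0) x
              + Real.log (1 * wNrm v (L (Jlow i)) / wNrm v (L 0))) :=
            Finset.sum_le_sum fun i _ => hb1 i
        _ = _ := by
            rw [Finset.sum_add_distrib, Finset.sum_const, Finset.card_univ,
              Fintype.card_fin, nsmul_eq_mul]
    · calc ∑ t : Fin n, weilHyperplane v (L (J t)) x
          ≤ ∑ t : Fin n, (weilHyperplane v (Lh t.succ) x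
              + Real.log (A t * wNrm v (L (J t)) / wNrm v (Lh t.succ))) :=
            Finset.sum_le_sum fun t _ => hb2 t
        _ = _ := Finset.sum_add_distrib
  have hSmu : -((n : ℝ) * Real.log ((M : ℝ) + 1))
      ≤ ∑ t : Fin n, weilHyperplane v (Lh t.succ) x := by
    have h := Finset.sum_le_sum (fun t (_ : t ∈ Finset.univ) => hlow (Fin.succ t))
    rw [Finset.sum_const, Finset.card_univ, Fintype.card_fin, nsmul_eq_mul] at h
    linarith [h]
  have hlogpos : 0 ≤ Real.log ((M : ℝ) + 1) :=
    Real.log_nonneg (le_add_of_nonneg_left (Nat.cast_nonneg M))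
  have hcast : (l : ℝ) - n + 1 = ((l - n + 1 : ℕ) : ℝ) := by
    push_cast [Nat.cast_sub hnl]
    ring
  rw [hcast, Fin.sum_univ_succ (fun t => weilHyperplane v (Lh t) x)]
  have hmn : ((l - n + 1 : ℕ) : ℝ) = ((l - n : ℕ) : ℝ) + 1 := by push_cast; ring
  have hnn : (0 : ℝ) ≤ ((l - n : ℕ) : ℝ) := Nat.cast_nonneg _
  have hkey : -(((l - n : ℕ) : ℝ) * ((n : ℝ) * Real.log ((M : ℝ) + 1)))
      ≤ ((l - n : ℕ) : ℝ) * ∑ t : Fin n, weilHyperplane v (Lh t.succ) x := by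
    nlinarith [mul_le_mul_of_nonneg_left hSmu hnn]
  rw [hmn] at hstep ⊢
  linarith [hstep, hkey]
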